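/- arXiv:1908.08656 — 4 statements merged into one kernel-verified Lean document; each statement's English description precedes it below -/
import Mathlib

section
/- Let p, q be real numbers with 0 ≤ q < p and p + q ≤ 1. Let (X_l, Y_l), l = 1,…,S be i.i.d. pairs where each trial picks outcome A with probability p (setting X_l = 1, Y_l = 0), outcome B with probability q (setting X_l = 0, Y_l = 1), or neither (both 0). Let X = Σ X_l and Y = Σ Y_l. Then Pr[Y − X ≥ 0] ≤ exp(−S(√p − √q)²). -/
open Real MeasureTheory ENNReal

/-- Chernoff-type bound for wedge sampling: with `S` i.i.d. trials, each picking
outcome `0` (point i₁) with probability `p`, outcome `1` (point i₂) with probability `q`,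
or outcome `2` (neither), the probability that outcome `1` occurs at least as often as
outcome `0` is at most `exp (-S (√p - √q)²)`. -/
theorem stmt_1 (p q : ℝ) (S : ℕ) (hq : 0 ≤ q) (hqp : q < p) (hpq : p + q ≤ 1)
    (μ : PMF (Fin 3)) (hμ0 : μ 0 = ENNReal.ofReal p) (hμ1 : μ 1 = ENNReal.ofReal q) :
    (Measure.pi fun _ : Fin S => μ.toMeasure)
      {ω | (Finset.univ.filter fun l => ω l = 0).card ≤
           (Finset.univ.filter fun l => ω l = 1).card} ≤
    ENNReal.ofReal (Real.exp (-(S : ℝ) * (Real.sqrt p - Real.sqrt q) ^ 2)) := by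
  have hp : 0 < p := lt_of_le_of_lt hq hqp
  set a := Real.sqrt q with ha_def
  set b := Real.sqrt p with hb_def
  have hb : 0 < b := Real.sqrt_pos.mpr hp
  have ha0 : 0 ≤ a := Real.sqrt_nonneg q
  have hab : a < b := Real.sqrt_lt_sqrt hq hqp
  have hq2 : a ^ 2 = q := Real.sq_sqrt hq
  have hp2 : b ^ 2 = p := Real.sq_sqrt hp.le
  set h : Fin 3 → ℝ≥0∞ := fun x =>
    if x = 0 then ENNReal.ofReal (a / b) else if x = 1 then ENNReal.ofReal (b / a) else 1
    with hh
  set ν := (Measure.pi fun _ : Fin S => μ.toMeasure) with hν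
  set s : Set (Fin S → Fin 3) := {ω | (Finset.univ.filter fun l => ω l = 0).card ≤
           (Finset.univ.filter fun l => ω l = 1).card} with hs
  set sF : Finset (Fin S → Fin 3) :=
    Finset.univ.filter (fun ω => (Finset.univ.filter fun l => ω l = 0).card ≤
           (Finset.univ.filter fun l => ω l = 1).card) with hsF
  -- singleton measures factor
  have hsingle : ∀ ω : Fin S → Fin 3, ν {ω} = ∏ l : Fin S, μ (ω l) := by
    intro ω
    rw [← Set.univ_pi_singleton ω, hν, Measure.pi_pi]
    exact Finset.prod_congr rfl fun l _ => PMF.toMeasure_apply_singleton _ _ (measurableSet_singleton _)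
  -- measure of s as a finite sum
  have hmeas : ν s = ∑ ω ∈ sF, ∏ l : Fin S, μ (ω l) := by
    have hse : s = ⋃ ω ∈ sF, {ω} := by
      ext ω; simp [hs, hsF]
    rw [hse, measure_biUnion_finset]
    · exact Finset.sum_congr rfl fun ω _ => hsingle ω
    · intro x _ y _ hxy
      simp [Function.onFun, Set.disjoint_singleton, hxy]
    · exact fun ω _ => measurableSet_singleton ω
  -- key pointwise bound
  have hpoint : ∀ ω ∈ sF, (∏ l : Fin S, μ (ω l)) ≤ ∏ l : Fin S, h (ω l) * μ (ω l) := by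
    intro ω hω
    have hcard : (Finset.univ.filter fun l => ω l = 0).card ≤
        (Finset.univ.filter fun l => ω l = 1).card := (Finset.mem_filter.mp hω).2
    rw [Finset.prod_mul_distrib]
    rcases eq_or_lt_of_le hq with hq0 | hq0
    · by_cases hex : ∃ l, ω l = 1
      · obtain ⟨l, hl⟩ := hex
        have hz : μ (ω l) = 0 := by rw [hl, hμ1, ← hq0]; simp
        rw [Finset.prod_eq_zero (Finset.mem_univ l) hz]; simp
      · push_neg at hex
        have hY : (Finset.univ.filter fun l => ω l = 1).card = 0 := by
          rw [Finset.card_eq_zero, Finset.filter_eq_empty_iff]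
          exact fun l _ => hex l
        have hX : (Finset.univ.filter fun l => ω l = 0) = ∅ := by
          rw [← Finset.card_eq_zero]; omega
        have hall : ∀ l, h (ω l) = 1 := by
          intro l
          have h0 : ω l ≠ 0 := by
            intro e
            have : l ∈ Finset.univ.filter fun l => ω l = 0 := by
              simp [e]
            rw [hX] at this; exact absurd this (Finset.notMem_empty l)
          simp [hh, h0, hex l]
        rw [Finset.prod_congr rfl fun l _ => hall l, Finset.prod_const_one, one_mul]
    · have ha : 0 < a := Real.sqrt_pos.mpr hq0
      have h1le : (1 : ℝ≥0∞) ≤ ∏ l : Fin S, h (ω l) := by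
        have hsplit : ∏ l : Fin S, h (ω l) =
            ENNReal.ofReal (a / b) ^ (Finset.univ.filter fun l => ω l = 0).card *
            ENNReal.ofReal (b / a) ^ (Finset.univ.filter fun l => ω l = 1).card := by
          rw [← Finset.prod_filter_mul_prod_filter_not Finset.univ (fun l => ω l = 0)]
          have e1 : ∏ l ∈ Finset.univ.filter fun l => ω l = 0, h (ω l)
              = ENNReal.ofReal (a / b) ^ (Finset.univ.filter fun l => ω l = 0).card := by
            rw [Finset.prod_congr rfl fun l hl => ?_, Finset.prod_const]
            have := (Finset.mem_filter.mp hl).2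
            simp [hh, this]
          rw [e1]
          congr 1
          rw [← Finset.prod_filter_mul_prod_filter_not
            (Finset.univ.filter fun l => ¬ω l = 0) (fun l => ω l = 1)]
          have hff : ((Finset.univ.filter fun l => ¬ω l = 0).filter fun l => ω l = 1)
              = Finset.univ.filter fun l => ω l = 1 := by
            rw [Finset.filter_filter]
            apply Finset.filter_congr
            intro l _
            constructor
            · exact fun hc => hc.2
            · intro h1; exact ⟨by rw [h1]; decide, h1⟩
          have e2 : ∏ l ∈ (Finset.univ.filter fun l => ¬ω l = 0).filter fun l => ω l = 1,
              h (ω l) = ENNReal.ofReal (b / a) ^ (Finset.univ.filter fun l => ω l = 1).card := by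
            rw [hff, Finset.prod_congr rfl fun l hl => ?_, Finset.prod_const]
            have h1 := (Finset.mem_filter.mp hl).2
            have h0 : ω l ≠ 0 := by rw [h1]; decide
            simp [hh, h0, h1]
          have e3 : ∏ l ∈ (Finset.univ.filter fun l => ¬ω l = 0).filter fun l => ¬ω l = 1,
              h (ω l) = 1 := by
            apply Finset.prod_eq_one
            intro l hl
            obtain ⟨hl', h1⟩ := Finset.mem_filter.mp hl
            have h0 := (Finset.mem_filter.mp hl').2
            simp [hh, h0, h1]
          rw [e2, e3, mul_one]
        rw [hsplit, ← ENNReal.ofReal_pow (by positivity), ← ENNReal.ofReal_pow (by positivity),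
          ← ENNReal.ofReal_mul (by positivity)]
        rw [show (1 : ℝ≥0∞) = ENNReal.ofReal 1 by simp]
        apply ENNReal.ofReal_le_ofReal
        have hba : (1 : ℝ) ≤ b / a := (one_le_div ha).mpr hab.le
        have hpos : (0 : ℝ) < (b / a) ^ (Finset.univ.filter fun l => ω l = 0).card :=
          pow_pos (div_pos hb ha) _
        rw [show a / b = (b / a)⁻¹ by rw [inv_div], inv_pow, ← div_eq_inv_mul]
        rw [one_le_div hpos]
        exact pow_le_pow_right₀ hba hcard
      calc (∏ l : Fin S, μ (ω l)) = 1 * ∏ l : Fin S, μ (ω l) := (one_mul _).symm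
        _ ≤ (∏ l : Fin S, h (ω l)) * ∏ l : Fin S, μ (ω l) := mul_le_mul_left h1le _
  -- product-sum exchange
  have hK : ∑ ω : Fin S → Fin 3, ∏ l : Fin S, h (ω l) * μ (ω l)
      = (∑ x : Fin 3, h x * μ x) ^ S := by
    rw [← Fintype.piFinset_univ,
      show ((∑ x : Fin 3, h x * μ x) ^ S) = ∏ _l : Fin S, ∑ x : Fin 3, h x * μ x by
        simp [Finset.prod_const], Finset.prod_univ_sum]
  -- value of the single-trial integral
  have hKval : (∑ x : Fin 3, h x * μ x) ≤ ENNReal.ofReal (1 - (b - a) ^ 2) := by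
    have hμ2 : μ 2 = ENNReal.ofReal (1 - (p + q)) := by
      have hsum := μ.tsum_coe
      rw [tsum_fintype, Fin.sum_univ_three, hμ0, hμ1,
        ← ENNReal.ofReal_add hp.le hq, add_comm] at hsum
      have := ENNReal.eq_sub_of_add_eq (by simp) hsum
      rw [this, ← ENNReal.ofReal_one, ← ENNReal.ofReal_sub _ (by positivity)]
    have hh0 : h 0 = ENNReal.ofReal (a / b) := by simp [hh]
    have hh1 : h 1 = ENNReal.ofReal (b / a) := by rw [hh]; norm_num
    have hh2 : h 2 = 1 := by
      show (if (2:Fin 3) = 0 then ENNReal.ofReal (a / b)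
        else if (2:Fin 3) = 1 then ENNReal.ofReal (b / a) else 1) = 1
      rw [if_neg (by decide), if_neg (by decide)]
    rw [Fin.sum_univ_three, hh0, hh1, hh2, hμ0, hμ1, hμ2, one_mul]
    have e1 : ENNReal.ofReal (a / b) * ENNReal.ofReal p = ENNReal.ofReal (a * b) := by
      rw [← ENNReal.ofReal_mul (by positivity)]
      congr 1
      rw [← hp2]; field_simp
    have e2 : ENNReal.ofReal (b / a) * ENNReal.ofReal q = ENNReal.ofReal (a * b) := by
      rcases eq_or_lt_of_le ha0 with h0 | h0
      · rw [← hq2, ← h0]; simp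
      · rw [← ENNReal.ofReal_mul (by positivity)]
        congr 1
        rw [← hq2]; field_simp
    rw [e1, e2, ← ENNReal.ofReal_add (by positivity) (by positivity),
      ← ENNReal.ofReal_add (by positivity) (by linarith)]
    apply ENNReal.ofReal_le_ofReal
    rw [← hp2, ← hq2]; ring_nf; nlinarith [sq_nonneg (b - a)]
  calc ν s = ∑ ω ∈ sF, ∏ l : Fin S, μ (ω l) := hmeas
    _ ≤ ∑ ω ∈ sF, ∏ l : Fin S, h (ω l) * μ (ω l) := Finset.sum_le_sum hpoint
    _ ≤ ∑ ω : Fin S → Fin 3, ∏ l : Fin S, h (ω l) * μ (ω l) :=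
        Finset.sum_le_sum_of_subset (Finset.subset_univ _)
    _ = (∑ x : Fin 3, h x * μ x) ^ S := hK
    _ ≤ ENNReal.ofReal (1 - (b - a) ^ 2) ^ S := pow_le_pow_left' hKval S
    _ ≤ ENNReal.ofReal (Real.exp (-((b - a) ^ 2))) ^ S := by
        exact pow_le_pow_left' (ENNReal.ofReal_le_ofReal (by
          have := Real.add_one_le_exp (-((b - a) ^ 2)); linarith)) S
    _ = ENNReal.ofReal (Real.exp (-(S : ℝ) * (b - a) ^ 2)) := by
        rw [← ENNReal.ofReal_pow (Real.exp_pos _).le, ← Real.exp_nat_mul]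
        ring_nf
end

section
/- Fix thresholds τ₁ > τ₂ > 0, let z = Σ_i x_i·q > 0 (sum of all n inner products, all nonnegative), and suppose S ≥ 3 z ln(n) / (√τ₁ − √τ₂)². Draw S i.i.d. samples where index i is chosen with probability (x_i·q)/z, and let counter[i] be the number of times i is drawn. Then with probability at least 1 − 1/n, for every pair of indices i₁, i₂ with x_{i₁}·q ≥ τ₁ and x_{i₂}·q ≤ τ₂, one has counter[i₁] > counter[i₂]. -/
open Real MeasureTheory ENNReal Finset

/-!
Fix a pair of indices with probabilities `p₂ ≤ p₁`. Replacing both probabilities by their geometric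
mean `√(p₁ p₂)` can only increase the weight `∏ₗ p (ω l)` of a sample sequence `ω` in which the
first index is drawn at most as often as the second, while the modified weights sum to
`1 - (√p₁ - √p₂)²`. Hence the bad event for the pair has probability at most
`(1 - (√p₁ - √p₂)²) ^ S ≤ exp (-S (√p₁ - √p₂)²)`, which the choice of `S` makes at most `n⁻³`;
a union bound over the `n²` pairs finishes the proof.
-/

lemma Fintype.prod_comp_eq_prod_pow_card {α ι M : Type*} [Fintype α] [DecidableEq α] [Fintype ι]
    [CommMonoid M] (f : α → M) (ω : ι → α) :
    ∏ l, f (ω l) = ∏ i, f i ^ #{l | ω l = i} := by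
  simp [← Finset.prod_fiberwise' univ ω f]

lemma PMF.toMeasure_pi_apply_finset {α ι : Type*} [Fintype ι] [MeasurableSpace α]
    [MeasurableSingletonClass α] (μ : PMF α) (s : Finset (ι → α)) :
    Measure.pi (fun _ : ι => μ.toMeasure) s = ∑ ω ∈ s, ∏ l, μ (ω l) := by
  simp [← sum_measure_singleton, PMF.toMeasure_apply_singleton]

lemma pow_mul_pow_le_sqrt_mul_pow_add {p₁ p₂ : ℝ} (h₂ : 0 ≤ p₂) (h : p₂ ≤ p₁) {c₁ c₂ : ℕ}
    (hc : c₁ ≤ c₂) : p₁ ^ c₁ * p₂ ^ c₂ ≤ √(p₁ * p₂) ^ (c₁ + c₂) := by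
  obtain ⟨k, rfl⟩ := Nat.exists_eq_add_of_le hc
  have hprod : 0 ≤ p₁ * p₂ := by nlinarith
  have hp₂ : p₂ ≤ √(p₁ * p₂) := le_sqrt_of_sq_le (by nlinarith)
  calc p₁ ^ c₁ * p₂ ^ (c₁ + k) = (p₁ * p₂) ^ c₁ * p₂ ^ k := by ring
    _ ≤ (p₁ * p₂) ^ c₁ * √(p₁ * p₂) ^ k := by gcongr
    _ = (√(p₁ * p₂) ^ 2) ^ c₁ * √(p₁ * p₂) ^ k := by rw [sq_sqrt hprod]
    _ = √(p₁ * p₂) ^ (c₁ + (c₁ + k)) := by ring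

section GeomMean

variable {α : Type*} [DecidableEq α]

noncomputable def pairGeomMean (p : α → ℝ) (a b : α) (i : α) : ℝ :=
  if i = a ∨ i = b then √(p a * p b) else p i

variable (p : α → ℝ) {a b : α}

lemma pairGeomMean_eq_of_mem_pair {i : α} (hi : i ∈ ({a, b} : Finset α)) :
    pairGeomMean p a b i = √(p a * p b) := by
  simp_all [pairGeomMean]

lemma pairGeomMean_eq_of_not_mem_pair {i : α} (hi : i ∉ ({a, b} : Finset α)) :
    pairGeomMean p a b i = p i := by
  simp_all [pairGeomMean]

variable {p}

lemma pairGeomMean_nonneg (hp : ∀ i, 0 ≤ p i) (i : α) : 0 ≤ pairGeomMean p a b i := by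
  unfold pairGeomMean
  split_ifs
  exacts [sqrt_nonneg _, hp i]

variable [Fintype α]

lemma sum_pairGeomMean (ha : 0 ≤ p a) (hb : 0 ≤ p b) (hab : a ≠ b) :
    ∑ i, pairGeomMean p a b i = ∑ i, p i - (√(p a) - √(p b)) ^ 2 := by
  have hcompl : ∑ i ∈ ({a, b} : Finset α)ᶜ, pairGeomMean p a b i =
      ∑ i ∈ ({a, b} : Finset α)ᶜ, p i :=
    sum_congr rfl fun i hi => pairGeomMean_eq_of_not_mem_pair p (mem_compl.mp hi)
  rw [← sum_add_sum_compl {a, b}, ← sum_add_sum_compl {a, b} p, hcompl, sum_pair hab,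
    sum_pair hab, pairGeomMean_eq_of_mem_pair p (by simp), pairGeomMean_eq_of_mem_pair p (by simp),
    sqrt_mul ha, sub_sq, sq_sqrt ha, sq_sqrt hb]
  ring

lemma prod_le_prod_pairGeomMean {ι : Type*} [Fintype ι] (hp : ∀ i, 0 ≤ p i) (hba : p b ≤ p a)
    (hab : a ≠ b) {ω : ι → α} (hω : #{l | ω l = a} ≤ #{l | ω l = b}) :
    ∏ l, p (ω l) ≤ ∏ l, pairGeomMean p a b (ω l) := by
  have hcompl : ∏ i ∈ ({a, b} : Finset α)ᶜ, pairGeomMean p a b i ^ #{l | ω l = i} =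
      ∏ i ∈ ({a, b} : Finset α)ᶜ, p i ^ #{l | ω l = i} :=
    prod_congr rfl fun i hi => by rw [pairGeomMean_eq_of_not_mem_pair p (mem_compl.mp hi)]
  rw [Fintype.prod_comp_eq_prod_pow_card, Fintype.prod_comp_eq_prod_pow_card,
    ← prod_mul_prod_compl {a, b}, ← prod_mul_prod_compl {a, b} (fun i => pairGeomMean p a b i ^ _),
    hcompl, prod_pair hab, prod_pair hab, pairGeomMean_eq_of_mem_pair p (by simp),
    pairGeomMean_eq_of_mem_pair p (by simp), ← pow_add]
  gcongr
  · exact prod_nonneg fun i _ => pow_nonneg (hp i) _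
  · exact pow_mul_pow_le_sqrt_mul_pow_add (hp b) hba hω

end GeomMean

lemma PMF.sum_toReal {α : Type*} [Fintype α] (μ : PMF α) : ∑ i, (μ i).toReal = 1 := by
  rw [← toReal_sum fun i _ => μ.apply_ne_top i, ← tsum_fintype (L := .unconditional _),
    μ.tsum_coe, toReal_one]

lemma PMF.toMeasure_pi_setOf_eq_ofReal_sum {α ι : Type*} [Fintype α] [Fintype ι] [DecidableEq ι]
    [MeasurableSpace α] [MeasurableSingletonClass α] (μ : PMF α) (E : (ι → α) → Prop)
    [DecidablePred E] :
    Measure.pi (fun _ : ι => μ.toMeasure) {ω | E ω} =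
      ENNReal.ofReal (∑ ω with E ω, ∏ l, (μ (ω l)).toReal) := by
  rw [← coe_filter_univ, μ.toMeasure_pi_apply_finset,
    ofReal_sum_of_nonneg fun ω _ => prod_nonneg fun l _ => toReal_nonneg]
  refine sum_congr rfl fun ω _ => ?_
  rw [ofReal_prod_of_nonneg fun l _ => toReal_nonneg]
  exact prod_congr rfl fun l _ => (ofReal_toReal (μ.apply_ne_top _)).symm

lemma PMF.toMeasure_pi_card_le_card_le {α : Type*} [Fintype α] [DecidableEq α] [MeasurableSpace α]
    [MeasurableSingletonClass α] (μ : PMF α) (S : ℕ) {a b : α} (hba : μ b ≤ μ a) :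
    Measure.pi (fun _ : Fin S => μ.toMeasure) {ω | #{l | ω l = a} ≤ #{l | ω l = b}} ≤
      ENNReal.ofReal (exp (-(S * (√(μ a).toReal - √(μ b).toReal) ^ 2))) := by
  obtain rfl | hab := eq_or_ne a b
  · simp
  set p : α → ℝ := fun i => (μ i).toReal
  have hp : ∀ i, 0 ≤ p i := fun _ => toReal_nonneg
  have hpba : p b ≤ p a := toReal_mono (μ.apply_ne_top a) hba
  set δ := (√(p a) - √(p b)) ^ 2
  have hsum : ∑ i, pairGeomMean p a b i = 1 - δ := by
    rw [sum_pairGeomMean (hp a) (hp b) hab, μ.sum_toReal]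
  have hδ : 0 ≤ 1 - δ := hsum ▸ sum_nonneg fun i _ => pairGeomMean_nonneg hp i
  rw [μ.toMeasure_pi_setOf_eq_ofReal_sum]
  refine ofReal_le_ofReal ?_
  calc ∑ ω : Fin S → α with #{l | ω l = a} ≤ #{l | ω l = b}, ∏ l, p (ω l)
      ≤ ∑ ω : Fin S → α with #{l | ω l = a} ≤ #{l | ω l = b}, ∏ l, pairGeomMean p a b (ω l) :=
        sum_le_sum fun ω hω => prod_le_prod_pairGeomMean hp hpba hab (mem_filter.mp hω).2
    _ ≤ ∑ ω : Fin S → α, ∏ l, pairGeomMean p a b (ω l) :=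
        sum_le_sum_of_subset_of_nonneg (subset_univ _) fun ω _ _ =>
          prod_nonneg fun l _ => pairGeomMean_nonneg hp _
    _ = (1 - δ) ^ S := by rw [← Fintype.sum_pow, hsum]
    _ ≤ exp (-δ) ^ S := by gcongr; exact one_sub_le_exp_neg δ
    _ = exp (-(S * δ)) := by rw [← exp_nat_mul]; ring_nf

lemma sq_sub_sqrt_div_le {τ₁ τ₂ w₁ w₂ z : ℝ} (hτ : τ₂ ≤ τ₁) (h₁ : τ₁ ≤ w₁) (h₂ : w₂ ≤ τ₂)
    (hz : 0 ≤ z) : (√τ₁ - √τ₂) ^ 2 / z ≤ (√(w₁ / z) - √(w₂ / z)) ^ 2 := by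
  rw [sqrt_div' _ hz, sqrt_div' _ hz, ← sub_div, div_pow, sq_sqrt hz]
  gcongr
  exact sub_nonneg.2 (sqrt_le_sqrt hτ)

lemma sqrt_toReal_ofReal (t : ℝ) : √(ENNReal.ofReal t).toReal = √t := by
  rcases le_total 0 t with ht | ht
  · rw [toReal_ofReal ht]
  · rw [ofReal_of_nonpos ht, toReal_zero, sqrt_zero, sqrt_eq_zero_of_nonpos ht]

lemma ofReal_exp_neg_mul_log_natCast {n : ℕ} (hn : n ≠ 0) (k : ℕ) :
    ENNReal.ofReal (exp (-(k * Real.log n))) = (n : ℝ≥0∞)⁻¹ ^ k := by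
  have hn' : (0 : ℝ) < n := by positivity
  rw [neg_mul_eq_mul_neg, ← Real.log_inv, exp_nat_mul, exp_log (inv_pos.2 hn'),
    ofReal_pow (by positivity), ofReal_inv_of_pos hn', ofReal_natCast]

lemma ENNReal.pow_mul_inv_pow_succ {a : ℝ≥0∞} (h₀ : a ≠ 0) (hT : a ≠ ⊤) (k : ℕ) :
    a ^ k * a⁻¹ ^ (k + 1) = a⁻¹ := by
  rw [pow_succ, ← mul_assoc, ← mul_pow, ENNReal.mul_inv_cancel h₀ hT, one_pow, one_mul]

lemma one_sub_card_sq_mul_le_measure_forall_forall {Ω ι : Type*} [MeasurableSpace Ω] [Fintype ι]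
    (P : Measure Ω) [IsProbabilityMeasure P] (A B : ι → Prop) (Q : ι → ι → Ω → Prop)
    {ε : ℝ≥0∞} (h : ∀ i j, A i → B j → P {ω | ¬ Q i j ω} ≤ ε) :
    1 - (Fintype.card ι : ℝ≥0∞) ^ 2 * ε ≤ P {ω | ∀ i j, A i → B j → Q i j ω} := by
  set G := {ω | ∀ i j, A i → B j → Q i j ω}
  have hbad : P Gᶜ ≤ (Fintype.card ι : ℝ≥0∞) ^ 2 * ε :=
    calc P Gᶜ ≤ P (⋃ k : ι × ι, {ω | A k.1 ∧ B k.2 ∧ ¬ Q k.1 k.2 ω}) :=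
          measure_mono fun ω hω => by simpa [G] using hω
      _ ≤ ∑ k : ι × ι, P {ω | A k.1 ∧ B k.2 ∧ ¬ Q k.1 k.2 ω} := measure_iUnion_fintype_le P _
      _ ≤ ∑ _k : ι × ι, ε := sum_le_sum fun ⟨i, j⟩ _ => by
          by_cases hij : A i ∧ B j
          · exact (measure_mono fun ω hω => hω.2.2).trans (h i j hij.1 hij.2)
          · exact (measure_mono (t := ∅) fun ω hω => hij ⟨hω.1, hω.2.1⟩).trans (by simp)
      _ = (Fintype.card ι : ℝ≥0∞) ^ 2 * ε := by simp [sq]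
  have hunion : 1 ≤ P G + P Gᶜ := by
    simpa using measure_union_le (μ := P) G Gᶜ
  exact (tsub_le_tsub_left hbad 1).trans (tsub_le_iff_right.2 hunion)

theorem stmt_2_general (n d S : ℕ) (x : Fin n → Fin d → ℝ) (q : Fin d → ℝ)
    (z : ℝ) (hzpos : 0 < z)
    (τ₁ τ₂ : ℝ) (hτ : τ₁ > τ₂) (hτ₂ : τ₂ > 0)
    (hS : (S : ℝ) ≥ 3 * z * Real.log n / (Real.sqrt τ₁ - Real.sqrt τ₂) ^ 2)
    (μ : PMF (Fin n)) (hμ : ∀ i, μ i = ENNReal.ofReal ((∑ j, x i j * q j) / z)) :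
    (Measure.pi fun _ : Fin S => μ.toMeasure)
      {ω | ∀ i₁ i₂ : Fin n, (∑ j, x i₁ j * q j) ≥ τ₁ → (∑ j, x i₂ j * q j) ≤ τ₂ →
        (Finset.univ.filter fun l => ω l = i₂).card <
        (Finset.univ.filter fun l => ω l = i₁).card} ≥
    1 - (n : ℝ≥0∞)⁻¹ := by
  obtain rfl | hn := eq_or_ne n 0
  · simp
  have hSz : 3 * Real.log n ≤ S * ((√τ₁ - √τ₂) ^ 2 / z) := by
    rw [ge_iff_le, div_le_iff₀ (pow_pos (sub_pos.2 (sqrt_lt_sqrt hτ₂.le hτ)) 2)] at hS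
    rw [← mul_div_assoc, le_div_iff₀ hzpos]
    linarith
  have hsqrt : ∀ i, √(μ i).toReal = √((∑ j, x i j * q j) / z) := fun i => by
    rw [hμ, sqrt_toReal_ofReal]
  have hpair : ∀ i₁ i₂ : Fin n, (∑ j, x i₁ j * q j) ≥ τ₁ → (∑ j, x i₂ j * q j) ≤ τ₂ →
      (Measure.pi fun _ : Fin S => μ.toMeasure)
        {ω | ¬ (#{l | ω l = i₂} < #{l | ω l = i₁})} ≤ (n : ℝ≥0∞)⁻¹ ^ 3 := by
    intro i₁ i₂ h₁ h₂
    have hμle : μ i₂ ≤ μ i₁ := by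
      rw [hμ, hμ]
      exact ofReal_le_ofReal (div_le_div_of_nonneg_right (by linarith) hzpos.le)
    simp only [not_lt]
    refine (μ.toMeasure_pi_card_le_card_le S hμle).trans ?_
    rw [← ofReal_exp_neg_mul_log_natCast hn 3, hsqrt, hsqrt]
    refine ofReal_le_ofReal (exp_le_exp.2 (neg_le_neg (hSz.trans ?_)))
    gcongr
    exact sq_sub_sqrt_div_le hτ.le h₁ h₂ hzpos.le
  have := one_sub_card_sq_mul_le_measure_forall_forall _ (fun i => (∑ j, x i j * q j) ≥ τ₁)
    (fun i => (∑ j, x i j * q j) ≤ τ₂)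
    (fun i₁ i₂ (ω : Fin S → Fin n) => #{l | ω l = i₂} < #{l | ω l = i₁}) hpair
  rwa [Fintype.card_fin, ENNReal.pow_mul_inv_pow_succ (by simpa) (natCast_ne_top n)] at this

/-- Theorem 1 (wedge sampling): with `S ≥ 3 z ln n / (√τ₁ - √τ₂)²` i.i.d. samples, where
index `i` is drawn with probability `(x_i · q) / z`, with probability at least `1 - 1/n`
every index with inner product at least `τ₁` receives a strictly larger counter value than
every index with inner product at most `τ₂`. -/
theorem stmt_2 (n d S : ℕ) (x : Fin n → Fin d → ℝ) (q : Fin d → ℝ)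
    (hx : ∀ i j, 0 ≤ x i j) (hq : ∀ j, 0 ≤ q j)
    (z : ℝ) (hz : z = ∑ i, ∑ j, x i j * q j) (hzpos : 0 < z)
    (τ₁ τ₂ : ℝ) (hτ : τ₁ > τ₂) (hτ₂ : τ₂ > 0)
    (hS : (S : ℝ) ≥ 3 * z * Real.log n / (Real.sqrt τ₁ - Real.sqrt τ₂) ^ 2)
    (μ : PMF (Fin n)) (hμ : ∀ i, μ i = ENNReal.ofReal ((∑ j, x i j * q j) / z)) :
    (Measure.pi fun _ : Fin S => μ.toMeasure)
      {ω | ∀ i₁ i₂ : Fin n, (∑ j, x i₁ j * q j) ≥ τ₁ → (∑ j, x i₂ j * q j) ≤ τ₂ →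
        (Finset.univ.filter fun l => ω l = i₂).card <
        (Finset.univ.filter fun l => ω l = i₁).card} ≥
    1 - (n : ℝ≥0∞)⁻¹ :=
  stmt_2_general n d S x q z hzpos τ₁ τ₂ hτ hτ₂ hS μ hμ
end

section
/- Let X be an n×d matrix and q ∈ ℝ^d, both with possibly negative entries, with ‖q‖₁ > 0 and z' = Σ_i |x_i|·|q| > 0 where |x_i| and |q| denote entrywise absolute values. Sample a column j with probability |q_j|·‖y_j‖₁/z' (where ‖y_j‖₁ = Σ_i |x_{ij}|), then a row i with probability |x_{ij}|/‖y_j‖₁, and define Z_i = sgn(x_{ij})·sgn(q_j)·1[row i chosen]. Then E[Z_i] = (x_i·q)/z'. -/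
open Real

/-- The sign function: `sgn u = 1` if `u ≥ 0`, else `-1`. -/
noncomputable def sgn (u : ℝ) : ℝ := if 0 ≤ u then 1 else -1

theorem sgn_mul_abs (u : ℝ) : sgn u * |u| = u := by
  unfold sgn
  split_ifs with hu
  · rw [one_mul, abs_of_nonneg hu]
  · rw [abs_of_neg (not_le.mp hu), neg_one_mul, neg_neg]

theorem stmt_10_general (n d : ℕ) (x : Fin n → Fin d → ℝ) (q : Fin d → ℝ)
    (c : Fin d → ℝ) (hcpos : ∀ j, 0 < c j)
    (z' : ℝ) (i : Fin n) :
    ∑ j, (sgn (x i j) * sgn (q j)) * (|x i j| / c j) * (|q j| * c j / z')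
      = (∑ j, x i j * q j) / z' := by
  rw [Finset.sum_div]
  refine Finset.sum_congr rfl fun j _ => ?_
  have hcj : c j ≠ 0 := (hcpos j).ne'
  calc _ = (sgn (x i j) * |x i j|) * (sgn (q j) * |q j|) / z' := by field_simp
    _ = x i j * q j / z' := by rw [sgn_mul_abs, sgn_mul_abs]

/-- Sign-trick wedge sampling on general inputs is unbiased (up to the factor `z'`):
sampling column `j` with probability `|q_j| ‖y_j‖₁ / z'`, then row `i` with probability
`|x_{ij}| / ‖y_j‖₁`, and returning `sgn(x_{ij}) sgn(q_j)` gives expectation `(x_i · q)/z'`. -/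
theorem stmt_10 (n d : ℕ) (x : Fin n → Fin d → ℝ) (q : Fin d → ℝ)
    (c : Fin d → ℝ) (hc : ∀ j, c j = ∑ i, |x i j|) (hcpos : ∀ j, 0 < c j)
    (hq1 : 0 < ∑ j, |q j|)
    (z' : ℝ) (hz : z' = ∑ i, ∑ j, |x i j| * |q j|) (hzpos : 0 < z') (i : Fin n) :
    ∑ j, (sgn (x i j) * sgn (q j)) * (|x i j| / c j) * (|q j| * c j / z')
      = (∑ j, x i j * q j) / z' :=
  stmt_10_general n d x q c hcpos z' i
end

section
/- Let p₁ > p₂ > 0 with p₁ + p₂ ≤ 1, and let S independent samples each select outcome 1 with probability p₁ and outcome 2 with probability p₂ (and neither otherwise). If S ≥ 3 ln(n)/(√p₁ − √p₂)² for some n ≥ 1, then the probability that outcome 2 is selected at least as often as outcome 1 is at most n^{−3}. -/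
open Real MeasureTheory
open scoped ENNReal

lemma pi_lintegral_prod {α : Type*} [MeasurableSpace α] (ν : Measure α) [IsProbabilityMeasure ν]
    (g : α → ℝ≥0∞) (hg : Measurable g) :
    ∀ S : ℕ, ∫⁻ ω, (∏ l, g (ω l))  ∂(Measure.pi fun _ : Fin S => ν) = (∫⁻ x, g x ∂ν) ^ S := by
  intro S
  induction S with
  | zero => simp
  | succ m ih =>
    have hmp := measurePreserving_piFinSuccAbove (fun _ : Fin (m+1) => ν) 0
    have hF : Measurable fun y : α × (Fin m → α) => g y.1 * ∏ l, g (y.2 l) := by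
      exact (hg.comp measurable_fst).mul
        (Finset.measurable_prod _ fun l _ => hg.comp ((measurable_pi_apply l).comp measurable_snd))
    have key : ∫⁻ ω, (∏ l, g (ω l))  ∂(Measure.pi fun _ : Fin (m+1) => ν)
        = ∫⁻ y, (g y.1 * ∏ l, g (y.2 l)) ∂(ν.prod (Measure.pi fun _ : Fin m => ν)) := by
      rw [← hmp.lintegral_comp hF]
      refine lintegral_congr fun ω => ?_
      simp [MeasurableEquiv.piFinSuccAbove_apply, Fin.prod_univ_succ, Fin.insertNthEquiv,
        Fin.tail]
    rw [key]
    rw [lintegral_prod_mul (f := g) (g := fun f : Fin m → α => ∏ l, g (f l)) hg.aemeasurable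
      (Finset.measurable_prod _ fun l _ => hg.comp (measurable_pi_apply l)).aemeasurable, ih,
      pow_succ, mul_comm]


/-- Per-pair failure bound: with `S ≥ 3 ln n / (√p₁ - √p₂)²` i.i.d. trials each selecting
outcome `0` with probability `p₁` and outcome `1` with probability `p₂ < p₁` (neither
otherwise), the probability that outcome `1` occurs at least as often as outcome `0` is
at most `n⁻³`. -/
theorem stmt_16 (p₁ p₂ : ℝ) (S n : ℕ) (hp₂ : 0 < p₂) (hp : p₂ < p₁) (hsum : p₁ + p₂ ≤ 1)
    (hn : 1 ≤ n) (hS : (S : ℝ) ≥ 3 * Real.log n / (Real.sqrt p₁ - Real.sqrt p₂) ^ 2)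
    (μ : PMF (Fin 3)) (hμ0 : μ 0 = ENNReal.ofReal p₁) (hμ1 : μ 1 = ENNReal.ofReal p₂) :
    (Measure.pi fun _ : Fin S => μ.toMeasure)
      {ω | (Finset.univ.filter fun l => ω l = 0).card ≤
           (Finset.univ.filter fun l => ω l = 1).card} ≤
    ENNReal.ofReal (1 / (n : ℝ) ^ 3) := by
  have hp₁ : 0 < p₁ := hp₂.trans hp
  set r := Real.sqrt p₁ with hr
  set s := Real.sqrt p₂ with hs
  have hs0 : 0 < s := Real.sqrt_pos.mpr hp₂
  have hr0 : 0 < r := Real.sqrt_pos.mpr hp₁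
  have hsr : s < r := Real.sqrt_lt_sqrt hp₂.le hp
  have hr2 : r ^ 2 = p₁ := Real.sq_sqrt hp₁.le
  have hs2 : s ^ 2 = p₂ := Real.sq_sqrt hp₂.le
  set δ := (r - s) ^ 2 with hδ
  have hδpos : 0 < δ := pow_pos (sub_pos.mpr hsr) 2
  have hδ1 : 1 - δ ≥ 0 := by nlinarith [mul_pos hr0 hs0]
  set a : ℝ≥0∞ := ENNReal.ofReal (r / s) with ha
  have ha1 : 1 ≤ a := ENNReal.one_le_ofReal.mpr ((one_le_div hs0).mpr hsr.le)
  have ha0 : a ≠ 0 := fun h => by simp [h] at ha1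
  have hat : a ≠ ⊤ := ENNReal.ofReal_ne_top
  set g : Fin 3 → ℝ≥0∞ := fun x => if x = 0 then a⁻¹ else if x = 1 then a else 1 with hg
  have hgmeas : Measurable g := measurable_of_countable g
  have hginv : g 0 = ENNReal.ofReal (s / r) := by
    show (if (0 : Fin 3) = 0 then a⁻¹ else if (0 : Fin 3) = 1 then a else 1) = _
    rw [if_pos rfl, ha, ← inv_div r s, ← ENNReal.ofReal_inv_of_pos (div_pos hr0 hs0)]
  -- the exponential moment
  have hmom : (∫⁻ x, g x ∂μ.toMeasure) = ENNReal.ofReal (1 - δ) := by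
    rw [lintegral_fintype, Fin.sum_univ_three]
    have h0 : μ.toMeasure {(0 : Fin 3)} = ENNReal.ofReal p₁ := by
      rw [PMF.toMeasure_apply_singleton _ _ (measurableSet_singleton _), hμ0]
    have h1 : μ.toMeasure {(1 : Fin 3)} = ENNReal.ofReal p₂ := by
      rw [PMF.toMeasure_apply_singleton _ _ (measurableSet_singleton _), hμ1]
    have h2 : μ.toMeasure {(2 : Fin 3)} = ENNReal.ofReal (1 - p₁ - p₂) := by
      rw [PMF.toMeasure_apply_singleton _ _ (measurableSet_singleton _)]
      have htot := μ.tsum_coe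
      rw [tsum_fintype, Fin.sum_univ_three, hμ0, hμ1] at htot
      have hne : ENNReal.ofReal p₁ + ENNReal.ofReal p₂ ≠ ⊤ := by
        simp [ENNReal.add_ne_top]
      have h21 : μ 2 + (ENNReal.ofReal p₁ + ENNReal.ofReal p₂) = 1 := by
        rw [← htot]; ring
      have : μ 2 = 1 - (ENNReal.ofReal p₁ + ENNReal.ofReal p₂) :=
        ENNReal.eq_sub_of_add_eq hne h21
      rw [this, ← ENNReal.ofReal_add hp₁.le hp₂.le, ← ENNReal.ofReal_one,
        ← ENNReal.ofReal_sub _ (by positivity), sub_sub]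
    rw [h0, h1, h2, hginv]
    have hg1 : g 1 = a := by simp [hg]
    have hg2 : g 2 = 1 := by simp [hg]
    rw [hg1, hg2, one_mul, ha,
      ← ENNReal.ofReal_mul (by positivity), ← ENNReal.ofReal_mul (by positivity),
      ← ENNReal.ofReal_add (by positivity) (by positivity),
      ← ENNReal.ofReal_add (by positivity) (by nlinarith)]
    congr 1
    have e1 : s / r * p₁ = s * r := by
      field_simp
      nlinarith
    have e2 : r / s * p₂ = r * s := by
      field_simp
      nlinarith
    rw [e1, e2]
    nlinarith
  -- Markov / event inclusion
  set F : (Fin S → Fin 3) → ℝ≥0∞ := fun ω => ∏ l, g (ω l) with hF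
  have hFmeas : Measurable F :=
    Finset.measurable_prod _ fun l _ => hgmeas.comp (measurable_pi_apply l)
  have hsub : {ω : Fin S → Fin 3 | (Finset.univ.filter fun l => ω l = 0).card ≤
      (Finset.univ.filter fun l => ω l = 1).card} ⊆ {ω | 1 ≤ F ω} := by
    intro ω hω
    simp only [Set.mem_setOf_eq] at hω ⊢
    set A := Finset.univ.filter fun l => ω l = 0 with hA
    set B := Finset.univ.filter fun l => ω l = 1 with hB
    have hdisj : Disjoint A B := by
      rw [Finset.disjoint_filter]
      intro x _ h0 h1
      rw [h0] at h1; exact absurd h1 (by decide)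
    have hFω : F ω = a⁻¹ ^ A.card * a ^ B.card := by
      show ∏ l, g (ω l) = _
      have : ∏ l ∈ A ∪ B, g (ω l) = ∏ l : Fin S, g (ω l) := by
        refine Finset.prod_subset (Finset.subset_univ _) fun x _ hx => ?_
        simp only [hA, hB, Finset.mem_union, Finset.mem_filter, Finset.mem_univ, true_and,
          not_or] at hx
        simp [hg, hx.1, hx.2]
      rw [← this, Finset.prod_union hdisj]
      congr 1
      · rw [Finset.prod_congr rfl fun x hx => ?_, Finset.prod_const]
        simp only [hA, Finset.mem_filter] at hx
        simp [hg, hx.2]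
      · rw [Finset.prod_congr rfl fun x hx => ?_, Finset.prod_const]
        simp only [hB, Finset.mem_filter] at hx
        simp [hg, hx.2, (by decide : (1 : Fin 3) ≠ 0)]
    rw [hFω]
    calc (1 : ℝ≥0∞) = (a⁻¹ * a) ^ A.card := by
          rw [ENNReal.inv_mul_cancel ha0 hat, one_pow]
      _ = a⁻¹ ^ A.card * a ^ A.card := mul_pow _ _ _
      _ ≤ a⁻¹ ^ A.card * a ^ B.card := by
          exact mul_le_mul' le_rfl (pow_le_pow_right₀ ha1 hω)
  have hmarkov : (Measure.pi fun _ : Fin S => μ.toMeasure) {ω | 1 ≤ F ω} ≤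
      ∫⁻ ω, F ω ∂(Measure.pi fun _ : Fin S => μ.toMeasure) := by
    have := mul_meas_ge_le_lintegral₀ (μ := Measure.pi fun _ : Fin S => μ.toMeasure)
      hFmeas.aemeasurable 1
    simpa using this
  refine le_trans (measure_mono hsub) (le_trans hmarkov ?_)
  rw [pi_lintegral_prod _ g hgmeas S, hmom, ← ENNReal.ofReal_pow hδ1]
  apply ENNReal.ofReal_le_ofReal
  have hn0 : (0 : ℝ) < n := by exact_mod_cast hn
  have h1 : (1 - δ) ^ S ≤ Real.exp (-δ) ^ S :=
    pow_le_pow_left₀ hδ1 (by linarith [Real.add_one_le_exp (-δ)]) S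
  have h2 : Real.exp (-δ) ^ S = Real.exp (-(S * δ)) := by
    rw [← Real.exp_nat_mul]; ring_nf
  have h3 : 3 * Real.log n ≤ S * δ := by
    rw [ge_iff_le, div_le_iff₀ hδpos] at hS
    exact hS
  have h4 : Real.exp (-(S * δ)) ≤ Real.exp (-(3 * Real.log n)) := by
    apply Real.exp_le_exp.mpr; linarith
  have h5 : Real.exp (-(3 * Real.log n)) = 1 / (n : ℝ) ^ 3 := by
    have h35 : (3 : ℝ) * Real.log n = ((3 : ℕ) : ℝ) * Real.log n := by norm_num
    rw [Real.exp_neg, h35, Real.exp_nat_mul, Real.exp_log hn0]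
    norm_num
  calc (1 - δ) ^ S ≤ Real.exp (-(S * δ)) := h2 ▸ h1
    _ ≤ 1 / (n : ℝ) ^ 3 := h5 ▸ h4
end
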